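/- Let (sₙ) be a sequence of i.i.d. Steinhaus random variables on a probability space (Ω,ℙ). Then the map T : L¹(Ω,ℙ) → c₀, Tf = (∫ f·sₙ dℙ)ₙ, is a surjective quotient map: its image is all of c₀, and for every x ∈ c₀ and ε > 0 there exists f ∈ L¹ with Tf = x and ‖f‖₁ ≤ (1+ε)‖x‖_∞. -/

import Mathlib

open MeasureTheory ProbabilityTheory Filter

noncomputable def steinhausLaw : Measure ℂ :=
  Measure.map (fun t : ℝ => Complex.exp (2 * Real.pi * t * Complex.I))
    (volume.restrict (Set.Ioc (0 : ℝ) 1))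

def IsSteinhausSeq {Ω : Type*} [MeasurableSpace Ω] (μ : Measure Ω) (s : ℕ → Ω → ℂ) : Prop :=
  (∀ n, Measurable (s n)) ∧ iIndepFun s μ ∧
    ∀ n, Measure.map (s n) μ = steinhausLaw

/-!
For `‖c‖ < 1` there is a continuous probability density on the unit circle whose first Fourier
coefficient is `c`: a convex combination of `1` and a rotated Fejér kernel, whose Fourier
coefficients are `(1 - |p|/m)₊`. Multiplying such densities along a finite block of the
independent coordinates gives a nonnegative `r` with `∫ r = R` and `∫ r sₙ = yₙ` on the block and
`0` off it, as soon as `‖yₙ‖ < R` there. Cutting `x` into the geometric blocks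
`‖xₙ‖ ∈ (M aʲ⁺¹, M aʲ]`, `M = ‖x‖_∞`, and summing the lifts with `R_j = (1 + a) M aʲ` in `L¹`
gives `f` with `‖f‖₁ ≤ (1 + a) M / (1 - a)`, which is `(1 + ε) M` for `a = ε / (2 + ε)`.
-/

open Finset ComplexConjugate

lemma continuous_exp_two_pi_mul_I :
    Continuous fun t : ℝ => Complex.exp (2 * Real.pi * t * Complex.I) := by
  fun_prop

instance : IsProbabilityMeasure steinhausLaw :=
  have : IsProbabilityMeasure (volume.restrict (Set.Ioc (0 : ℝ) 1)) := ⟨by simp⟩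
  Measure.isProbabilityMeasure_map continuous_exp_two_pi_mul_I.aemeasurable

lemma ae_norm_eq_one_steinhausLaw : ∀ᵐ z ∂steinhausLaw, ‖z‖ = 1 := by
  refine ae_map_iff continuous_exp_two_pi_mul_I.aemeasurable
    (isClosed_eq continuous_norm continuous_const).measurableSet |>.mpr (ae_of_all _ fun t => ?_)
  rw [show 2 * Real.pi * t * Complex.I = ((2 * Real.pi * t : ℝ) : ℂ) * Complex.I by push_cast; ring]
  exact Complex.norm_exp_ofReal_mul_I _

lemma integral_steinhausLaw {E : Type*} [NormedAddCommGroup E] [NormedSpace ℝ E] {g : ℂ → E}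
    (hg : AEStronglyMeasurable g steinhausLaw) :
    ∫ z, g z ∂steinhausLaw =
      ∫ t in Set.Ioc (0 : ℝ) 1, g (Complex.exp (2 * Real.pi * t * Complex.I)) :=
  integral_map continuous_exp_two_pi_mul_I.aemeasurable hg

lemma Continuous.integrable_steinhausLaw {E : Type*} [NormedAddCommGroup E] {g : ℂ → E}
    (hg : Continuous g) : Integrable g steinhausLaw :=
  (integrable_map_measure hg.aestronglyMeasurable continuous_exp_two_pi_mul_I.aemeasurable).mpr
    ((hg.comp continuous_exp_two_pi_mul_I).integrableOn_Icc.mono_set Set.Ioc_subset_Icc_self)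

lemma integral_steinhausLaw_pow_mul_conj_pow (j k : ℕ) :
    ∫ z, z ^ j * conj z ^ k ∂steinhausLaw = if j = k then 1 else 0 := by
  set c : ℂ := ((j : ℤ) - k : ℤ) * (2 * Real.pi * Complex.I)
  have hpt (t : ℝ) : Complex.exp (2 * Real.pi * t * Complex.I) ^ j *
      conj (Complex.exp (2 * Real.pi * t * Complex.I)) ^ k = Complex.exp (c * t) := by
    rw [← Complex.exp_conj, ← Complex.exp_nat_mul, ← Complex.exp_nat_mul, ← Complex.exp_add]
    simp only [c, map_mul, Complex.conj_ofReal, Complex.conj_I, map_ofNat]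
    push_cast
    ring_nf
  rw [integral_steinhausLaw (by fun_prop), setIntegral_congr_fun measurableSet_Ioc
    (fun t _ => hpt t), ← intervalIntegral.integral_of_le zero_le_one]
  split_ifs with h
  · simp [c, h]
  · have hjk : ((j : ℤ) - k : ℤ) ≠ 0 := by omega
    have hc : c ≠ 0 := mul_ne_zero (by exact_mod_cast hjk) (by simp [Real.pi_ne_zero])
    rw [integral_exp_mul_complex hc]
    simp only [Complex.ofReal_one, mul_one, Complex.ofReal_zero, mul_zero, Complex.exp_zero, c]
    rw [Complex.exp_int_mul_two_pi_mul_I, sub_self, zero_div]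

lemma integral_steinhausLaw_id : ∫ z, z ∂steinhausLaw = 0 := by
  simpa using integral_steinhausLaw_pow_mul_conj_pow 1 0

noncomputable def fejerKernel (m : ℕ) (w : ℂ) : ℝ := ‖∑ j ∈ range m, w ^ j‖ ^ 2 / m

lemma fejerKernel_nonneg (m : ℕ) (w : ℂ) : 0 ≤ fejerKernel m w := by
  unfold fejerKernel; positivity

@[fun_prop]
lemma continuous_fejerKernel (m : ℕ) : Continuous (fejerKernel m) := by
  unfold fejerKernel; fun_prop

lemma ofReal_fejerKernel_mul_pow (m p : ℕ) (b z : ℂ) :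
    (fejerKernel m (b * z) : ℂ) * z ^ p = (1 / m : ℂ) *
      ∑ j ∈ range m, ∑ k ∈ range m, (b ^ j * conj b ^ k) * (z ^ (j + p) * conj z ^ k) := by
  rw [fejerKernel, Complex.ofReal_div, Complex.ofReal_pow, Complex.ofReal_natCast,
    ← Complex.mul_conj', map_sum, sum_mul_sum, div_mul_eq_mul_div, one_div_mul_eq_div, sum_mul,
    sum_div, sum_div]
  refine Finset.sum_congr rfl fun j _ => ?_
  rw [sum_mul, sum_div, sum_div]
  refine Finset.sum_congr rfl fun k _ => ?_
  simp only [map_mul, map_pow]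
  ring

-- The truncated subtraction `m - p` makes this correct for `p ≥ m` as well.
lemma integral_fejerKernel_mul_pow {b : ℂ} (hb : ‖b‖ = 1) (m p : ℕ) :
    ∫ z, (fejerKernel m (b * z) : ℂ) * z ^ p ∂steinhausLaw =
      ((m - p : ℕ) / m : ℂ) * conj b ^ p := by
  have hbb : b * conj b = 1 := by simp [Complex.mul_conj', hb]
  have hcoeff (j : ℕ) : b ^ j * conj b ^ (j + p) = conj b ^ p := by
    rw [pow_add, ← mul_assoc, ← mul_pow, hbb, one_pow, one_mul]
  have hcard : #{j ∈ range m | j + p < m} = m - p := by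
    rw [show {j ∈ range m | j + p < m} = range (m - p) by ext; simp; omega, card_range]
  have hint (j k : ℕ) : Integrable
      (fun z : ℂ => (b ^ j * conj b ^ k) * (z ^ (j + p) * conj z ^ k)) steinhausLaw :=
    Continuous.integrable_steinhausLaw (by fun_prop)
  simp_rw [ofReal_fejerKernel_mul_pow]
  rw [integral_const_mul,
    integral_finsetSum _ fun j _ => integrable_finsetSum _ fun k _ => hint j k]
  simp_rw [integral_finsetSum _ fun k _ => hint _ k, integral_const_mul,
    integral_steinhausLaw_pow_mul_conj_pow, mul_ite, mul_one, mul_zero, sum_ite_eq, mem_range,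
    hcoeff, ← sum_filter, sum_const, hcard, nsmul_eq_mul]
  ring

lemma integral_fejerKernel {b : ℂ} (hb : ‖b‖ = 1) {m : ℕ} (hm : m ≠ 0) :
    ∫ z, fejerKernel m (b * z) ∂steinhausLaw = 1 := by
  have h := integral_fejerKernel_mul_pow hb m 0
  simp only [pow_zero, mul_one, Nat.sub_zero] at h
  rw [integral_complex_ofReal, div_self (Nat.cast_ne_zero.mpr hm)] at h
  exact_mod_cast h

lemma exists_density_steinhausLaw_integral_mul_eq {c : ℂ} (hc : ‖c‖ < 1) :
    ∃ g : ℂ → ℝ, Continuous g ∧ (∀ z, 0 ≤ g z) ∧ ∫ z, g z ∂steinhausLaw = 1 ∧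
      ∫ z, (g z : ℂ) * z ∂steinhausLaw = c := by
  obtain ⟨n, hn⟩ := exists_nat_one_div_lt (sub_pos.mpr hc)
  have hq : ‖c‖ < n / (n + 1) := by
    rw [show (n : ℝ) / (n + 1) = 1 - 1 / (n + 1) by field_simp; ring]
    linarith
  have hq0 : (0 : ℝ) < n / (n + 1) := (norm_nonneg c).trans_lt hq
  set l : ℝ := ‖c‖ / (n / (n + 1))
  have hl0 : 0 ≤ l := by positivity
  have hl1 : l ≤ 1 := (div_le_one hq0).mpr hq.le
  have hlq : (l : ℂ) * (n / (n + 1 : ℕ)) = ‖c‖ := by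
    have h : l * (n / (n + 1)) = ‖c‖ := div_mul_cancel₀ _ hq0.ne'
    rw [← h]
    push_cast
    rfl
  set b : ℂ := Complex.exp (↑(-c.arg) * Complex.I)
  have hb : ‖b‖ = 1 := Complex.norm_exp_ofReal_mul_I _
  have hconj_b : conj b = Complex.exp (c.arg * Complex.I) := by
    rw [← Complex.exp_conj]; simp
  have hF : Integrable (fun z => fejerKernel (n + 1) (b * z)) steinhausLaw :=
    Continuous.integrable_steinhausLaw (by fun_prop)
  have hFz : Integrable (fun z => (fejerKernel (n + 1) (b * z) : ℂ) * z) steinhausLaw :=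
    Continuous.integrable_steinhausLaw (by fun_prop)
  have hid : Integrable (fun z : ℂ => z) steinhausLaw :=
    Continuous.integrable_steinhausLaw continuous_id
  refine ⟨fun z => (1 - l) + l * fejerKernel (n + 1) (b * z), by fun_prop,
    fun z => add_nonneg (by linarith) (mul_nonneg hl0 (fejerKernel_nonneg _ _)), ?_, ?_⟩
  · rw [integral_add (integrable_const _) (hF.const_mul l), integral_const_mul,
      integral_fejerKernel hb n.succ_ne_zero]
    simp
  · have hcoeff := integral_fejerKernel_mul_pow hb (n + 1) 1
    simp only [pow_one, Nat.add_sub_cancel] at hcoeff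
    simp only [Complex.ofReal_add, Complex.ofReal_mul, add_mul, mul_assoc]
    rw [integral_add (hid.const_mul _) (hFz.const_mul _), integral_const_mul, integral_const_mul,
      integral_steinhausLaw_id, hcoeff, hconj_b, mul_zero, zero_add, ← mul_assoc, hlq,
      Complex.norm_mul_exp_arg_mul_I]

section TsumIntegral

variable {α E : Type*} [MeasurableSpace α] {μ : Measure α} [NormedAddCommGroup E]

lemma lintegral_enorm_tsum_le {F : ℕ → α → E} (hF : ∀ i, Integrable (F i) μ)
    (hsum : Summable fun i => ∫ a, ‖F i a‖ ∂μ) :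
    ∫⁻ a, ‖∑' i, F i a‖ₑ ∂μ ≤ ENNReal.ofReal (∑' i, ∫ a, ‖F i a‖ ∂μ) :=
  calc ∫⁻ a, ‖∑' i, F i a‖ₑ ∂μ ≤ ∫⁻ a, ∑' i, ‖F i a‖ₑ ∂μ :=
        lintegral_mono fun _ => enorm_tsum_le_tsum_enorm
    _ = ∑' i, ∫⁻ a, ‖F i a‖ₑ ∂μ := lintegral_tsum fun i => (hF i).1.enorm
    _ = ∑' i, ENNReal.ofReal (∫ a, ‖F i a‖ ∂μ) := by
        simp_rw [ofReal_integral_norm_eq_lintegral_enorm (hF _)]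
    _ = ENNReal.ofReal (∑' i, ∫ a, ‖F i a‖ ∂μ) :=
        (ENNReal.ofReal_tsum_of_nonneg (fun _ => integral_nonneg fun _ => norm_nonneg _) hsum).symm

variable [CompleteSpace E] [SecondCountableTopology E] [MeasurableSpace E] [BorelSpace E]

lemma integrable_tsum_of_summable_integral_norm {F : ℕ → α → E} (hF : ∀ i, Integrable (F i) μ)
    (hsum : Summable fun i => ∫ a, ‖F i a‖ ∂μ) : Integrable (fun a => ∑' i, F i a) μ :=
  ⟨(AEMeasurable.tsum fun i => (hF i).aemeasurable).aestronglyMeasurable,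
    (lintegral_enorm_tsum_le hF hsum).trans_lt ENNReal.ofReal_lt_top⟩

lemma integral_norm_tsum_le {F : ℕ → α → E} (hF : ∀ i, Integrable (F i) μ)
    (hsum : Summable fun i => ∫ a, ‖F i a‖ ∂μ) :
    ∫ a, ‖∑' i, F i a‖ ∂μ ≤ ∑' i, ∫ a, ‖F i a‖ ∂μ := by
  rw [← ENNReal.ofReal_le_ofReal_iff (tsum_nonneg fun _ => integral_nonneg fun _ => norm_nonneg _),
    ofReal_integral_norm_eq_lintegral_enorm (integrable_tsum_of_summable_integral_norm hF hsum)]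
  exact lintegral_enorm_tsum_le hF hsum

end TsumIntegral

lemma exists_geometric_blocks {E : Type*} [NormedAddCommGroup E] {x : ℕ → E}
    (hx : Tendsto x atTop (nhds 0)) {M a : ℝ} (hM : 0 < M) (hxM : ∀ n, ‖x n‖ ≤ M) (ha0 : 0 < a)
    (ha1 : a < 1) :
    ∃ S : ℕ → Finset ℕ, (∀ j, ∀ n ∈ S j, ‖x n‖ ≤ M * a ^ j) ∧
      ∀ n, ∑' j, (if n ∈ S j then x n else 0) = x n := by
  classical
  have hJ (n : ℕ) : ∃ j, x n ≠ 0 → M * a ^ (j + 1) < ‖x n‖ ∧ ‖x n‖ ≤ M * a ^ j := by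
    by_cases hn : x n = 0
    · exact ⟨0, fun h => (h hn).elim⟩
    obtain ⟨j, hj⟩ := exists_nat_pow_near_of_lt_one (div_pos (norm_pos_iff.mpr hn) hM)
      ((div_le_one hM).mpr (hxM n)) ha0 ha1
    exact ⟨j, fun _ => by rwa [lt_div_iff₀' hM, div_le_iff₀' hM] at hj⟩
  choose J hJ using hJ
  have hfin (j : ℕ) : {n | x n ≠ 0 ∧ J n = j}.Finite := by
    have hsmall : ∀ᶠ n in cofinite, ‖x n‖ < M * a ^ (j + 1) := by
      rw [Nat.cofinite_eq_atTop]
      exact hx.norm.eventually (gt_mem_nhds (by rw [norm_zero]; positivity))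
    refine (eventually_cofinite.mp hsmall).subset fun n ⟨hn, hJn⟩ => ?_
    simpa [← hJn] using (hJ n hn).1.le
  refine ⟨fun j => (hfin j).toFinset, fun j n hn => ?_, fun n => ?_⟩
  · obtain ⟨hxn, rfl⟩ := (hfin j).mem_toFinset.mp hn
    exact (hJ n hxn).2
  · by_cases hn : x n = 0
    · simp [hn]
    rw [tsum_eq_single (J n) fun j hj => if_neg fun h => hj ((hfin j).mem_toFinset.mp h).2.symm,
      if_pos ((hfin _).mem_toFinset.mpr ⟨hn, rfl⟩)]

namespace IsSteinhausSeq

variable {Ω : Type*} [MeasurableSpace Ω] {μ : Measure Ω} {s : ℕ → Ω → ℂ}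

lemma ae_norm_eq_one (hs : IsSteinhausSeq μ s) (n : ℕ) : ∀ᵐ ω ∂μ, ‖s n ω‖ = 1 :=
  ae_of_ae_map (hs.1 n).aemeasurable ((hs.2.2 n).symm ▸ ae_norm_eq_one_steinhausLaw)

lemma integrable_mul (hs : IsSteinhausSeq μ s) (n : ℕ) {f : Ω → ℂ} (hf : Integrable f μ) :
    Integrable (fun ω => f ω * s n ω) μ :=
  hf.mul_bdd (hs.1 n).aestronglyMeasurable ((hs.ae_norm_eq_one n).mono fun _ h => h.le)

lemma integral_norm_mul (hs : IsSteinhausSeq μ s) (n : ℕ) (f : Ω → ℂ) :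
    ∫ ω, ‖f ω * s n ω‖ ∂μ = ∫ ω, ‖f ω‖ ∂μ :=
  integral_congr_ae ((hs.ae_norm_eq_one n).mono fun _ h => by simp [h])

lemma integral_comp (hs : IsSteinhausSeq μ s) (n : ℕ) {E : Type*} [NormedAddCommGroup E]
    [NormedSpace ℝ E] {g : ℂ → E} (hg : AEStronglyMeasurable g steinhausLaw) :
    ∫ ω, g (s n ω) ∂μ = ∫ z, g z ∂steinhausLaw := by
  rw [← hs.2.2 n] at hg ⊢
  exact (integral_map (hs.1 n).aemeasurable hg).symm

variable {𝕜 : Type*} [RCLike 𝕜]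

lemma integrable_prod_comp [IsFiniteMeasure μ] (hs : IsSteinhausSeq μ s) (S : Finset ℕ)
    {g : ℕ → ℂ → 𝕜} (hg : ∀ k, Continuous (g k)) :
    Integrable (fun ω => ∏ k ∈ S, g k (s k ω)) μ := by
  choose C hC using fun k =>
    (isCompact_sphere (0 : ℂ) 1).exists_bound_of_continuousOn (hg k).continuousOn
  have hmeas : ∀ k, Measurable fun ω => g k (s k ω) := fun k => (hg k).measurable.comp (hs.1 k)
  refine Integrable.of_bound (Finset.measurable_prod S fun k _ => hmeas k).aestronglyMeasurable
    (∏ k ∈ S, C k) ?_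
  filter_upwards [ae_all_iff.mpr hs.ae_norm_eq_one] with ω hω
  rw [norm_prod]
  exact prod_le_prod (fun k _ => norm_nonneg _) fun k _ => hC k _ (by simpa using hω k)

lemma integral_prod_comp (hs : IsSteinhausSeq μ s) (S : Finset ℕ) {g : ℕ → ℂ → 𝕜}
    (hg : ∀ k, AEStronglyMeasurable (g k) steinhausLaw) :
    ∫ ω, ∏ k ∈ S, g k (s k ω) ∂μ = ∏ k ∈ S, ∫ z, g k z ∂steinhausLaw := by
  have hS := iIndepFun.integral_fun_prod_comp (X := fun k : S => s k) (f := fun k : S => g k)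
    (hs.2.1.precomp Subtype.val_injective) (fun k => (hs.1 k).aemeasurable)
    (fun k => (hs.2.2 k).symm ▸ hg k)
  have hcoe (ω : Ω) : ∏ k : S, g k (s k ω) = ∏ k ∈ S, g k (s k ω) :=
    prod_coe_sort S fun k => g k (s k ω)
  simp only [hcoe, prod_coe_sort S fun k => ∫ ω, g k (s k ω) ∂μ] at hS
  rw [hS]
  exact Finset.prod_congr rfl fun k _ => hs.integral_comp k (hg k)

lemma integral_comp_mul_prod_comp (hs : IsSteinhausSeq μ s) {n : ℕ} {S : Finset ℕ} (hn : n ∉ S)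
    {h : ℂ → 𝕜} (hh : AEStronglyMeasurable h steinhausLaw) {g : ℕ → ℂ → 𝕜}
    (hg : ∀ k, AEStronglyMeasurable (g k) steinhausLaw) :
    ∫ ω, h (s n ω) * ∏ k ∈ S, g k (s k ω) ∂μ =
      (∫ z, h z ∂steinhausLaw) * ∏ k ∈ S, ∫ z, g k z ∂steinhausLaw := by
  classical
  obtain ⟨G, hGn, hGg⟩ : ∃ G : ℕ → ℂ → 𝕜, G n = h ∧ ∀ k ≠ n, G k = g k :=
    ⟨Function.update g n h, Function.update_self n h g, fun k hk => Function.update_of_ne hk h g⟩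
  have hGS : ∀ k ∈ S, G k = g k := fun k hk => hGg k (ne_of_mem_of_not_mem hk hn)
  have hG : ∀ k, AEStronglyMeasurable (G k) steinhausLaw := fun k => by
    rcases eq_or_ne k n with rfl | hk
    · rwa [hGn]
    · rw [hGg k hk]; exact hg k
  calc ∫ ω, h (s n ω) * ∏ k ∈ S, g k (s k ω) ∂μ = ∫ ω, ∏ k ∈ insert n S, G k (s k ω) ∂μ := by
        simp only [prod_insert hn, hGn, Finset.prod_congr rfl fun k hk => congrFun (hGS k hk) _]
    _ = ∏ k ∈ insert n S, ∫ z, G k z ∂steinhausLaw := hs.integral_prod_comp _ hG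
    _ = (∫ z, h z ∂steinhausLaw) * ∏ k ∈ S, ∫ z, g k z ∂steinhausLaw := by
        rw [prod_insert hn, hGn, Finset.prod_congr rfl fun k hk => by rw [hGS k hk]]

lemma exists_nonneg_lift_finset [IsFiniteMeasure μ] (hs : IsSteinhausSeq μ s) (S : Finset ℕ)
    (y : ℕ → ℂ) {R : ℝ} (hR : 0 ≤ R) (hy : ∀ n ∈ S, ‖y n‖ < R) :
    ∃ r : Ω → ℝ, Integrable r μ ∧ (∀ ω, 0 ≤ r ω) ∧ ∫ ω, r ω ∂μ = R ∧
      ∀ n, ∫ ω, (r ω : ℂ) * s n ω ∂μ = if n ∈ S then y n else 0 := by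
  classical
  have hc (n : ℕ) : ‖if n ∈ S then y n / R else 0‖ < 1 := by
    split_ifs with hn
    · rw [norm_div, Complex.norm_real, Real.norm_of_nonneg hR]
      exact (div_lt_one ((norm_nonneg _).trans_lt (hy n hn))).mpr (hy n hn)
    · simp
  choose g hg_cont hg_nonneg hg_one hg_coeff using
    fun n => exists_density_steinhausLaw_integral_mul_eq (hc n)
  have hg_meas (k : ℕ) : AEStronglyMeasurable (fun z => (g k z : ℂ)) steinhausLaw :=
    (Complex.continuous_ofReal.comp (hg_cont k)).aestronglyMeasurable
  have hg_one' (k : ℕ) : ∫ z, (g k z : ℂ) ∂steinhausLaw = 1 := by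
    rw [integral_complex_ofReal, hg_one k, Complex.ofReal_one]
  have hcast (ω : Ω) : ((R * ∏ k ∈ S, g k (s k ω) : ℝ) : ℂ) = R * ∏ k ∈ S, (g k (s k ω) : ℂ) := by
    push_cast; rfl
  refine ⟨fun ω => R * ∏ k ∈ S, g k (s k ω), (hs.integrable_prod_comp S hg_cont).const_mul R,
    fun ω => mul_nonneg hR (prod_nonneg fun k _ => hg_nonneg k _), ?_, fun n => ?_⟩
  · rw [integral_const_mul, hs.integral_prod_comp S fun k => (hg_cont k).aestronglyMeasurable]
    simp [hg_one]
  simp only [hcast]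
  split_ifs with hn
  · have hR0 : (R : ℂ) ≠ 0 := Complex.ofReal_ne_zero.mpr ((norm_nonneg _).trans_lt (hy n hn)).ne'
    calc ∫ ω, R * (∏ k ∈ S, (g k (s k ω) : ℂ)) * s n ω ∂μ
        = ∫ ω, R * ((g n (s n ω) : ℂ) * s n ω * ∏ k ∈ S.erase n, (g k (s k ω) : ℂ)) ∂μ := by
          congr 1; ext ω; rw [← mul_prod_erase S _ hn]; ring
      _ = R * (y n / R) := by
          rw [integral_const_mul, hs.integral_comp_mul_prod_comp (notMem_erase n S)
            (h := fun z => (g n z : ℂ) * z) (by fun_prop) hg_meas, hg_coeff n]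
          simp [hn, hg_one']
      _ = y n := mul_div_cancel₀ _ hR0
  · calc ∫ ω, R * (∏ k ∈ S, (g k (s k ω) : ℂ)) * s n ω ∂μ
        = ∫ ω, R * (s n ω * ∏ k ∈ S, (g k (s k ω) : ℂ)) ∂μ := by
          congr 1; ext ω; ring
      _ = 0 := by
          rw [integral_const_mul, hs.integral_comp_mul_prod_comp hn
            (h := fun z => z) aestronglyMeasurable_id hg_meas, integral_steinhausLaw_id]
          simp

lemma exists_lift_of_blocks [IsFiniteMeasure μ] (hs : IsSteinhausSeq μ s) (x : ℕ → ℂ)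
    (S : ℕ → Finset ℕ) {R : ℕ → ℝ} (hR0 : ∀ j, 0 ≤ R j) (hR : Summable R)
    (hxR : ∀ j, ∀ n ∈ S j, ‖x n‖ < R j) :
    ∃ f : Ω → ℂ, Integrable f μ ∧
      (∀ n, ∫ ω, f ω * s n ω ∂μ = ∑' j, if n ∈ S j then x n else 0) ∧
      ∫ ω, ‖f ω‖ ∂μ ≤ ∑' j, R j := by
  choose r hr_int hr_nonneg hr_integral hr_coeff using
    fun j => hs.exists_nonneg_lift_finset (S j) x (hR0 j) (hxR j)
  have hF_int (j : ℕ) : Integrable (fun ω => (r j ω : ℂ)) μ := (hr_int j).ofReal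
  have hF_norm (j : ℕ) : ∫ ω, ‖(r j ω : ℂ)‖ ∂μ = R j := by
    simp_rw [Complex.norm_real, Real.norm_of_nonneg (hr_nonneg j _), hr_integral]
  have hsum : Summable fun j => ∫ ω, ‖(r j ω : ℂ)‖ ∂μ := by simpa only [hF_norm] using hR
  refine ⟨fun ω => ∑' j, (r j ω : ℂ), integrable_tsum_of_summable_integral_norm hF_int hsum,
    fun n => ?_, (integral_norm_tsum_le hF_int hsum).trans_eq (tsum_congr hF_norm)⟩
  simp_rw [← tsum_mul_right]
  rw [← integral_tsum_of_summable_integral_norm (fun j => hs.integrable_mul n (hF_int j))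
    (by simpa only [hs.integral_norm_mul] using hsum)]
  exact tsum_congr fun j => hr_coeff j n

end IsSteinhausSeq

/-- The map `T : L¹(Ω,μ) → c₀`, `Tf = (∫ f sₙ)ₙ`, is a surjective quotient map:
every `x ∈ c₀` lifts, for every `ε > 0`, to some `f ∈ L¹` with `Tf = x` and
`‖f‖₁ ≤ (1+ε) ‖x‖_∞`. -/
theorem stmt3 {Ω : Type*} [MeasurableSpace Ω] (μ : Measure Ω) [IsProbabilityMeasure μ]
    (s : ℕ → Ω → ℂ) (hs : IsSteinhausSeq μ s)
    (x : ℕ → ℂ) (hx : Tendsto x atTop (nhds 0)) (ε : ℝ) (hε : 0 < ε) :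
    ∃ f : Ω → ℂ, Integrable f μ ∧ (∀ n, ∫ ω, f ω * s n ω ∂μ = x n) ∧
      ∫ ω, ‖f ω‖ ∂μ ≤ (1 + ε) * ⨆ n, ‖x n‖ := by
  set M := ⨆ n, ‖x n‖
  have hxM (n : ℕ) : ‖x n‖ ≤ M := le_ciSup hx.norm.bddAbove_range n
  rcases ((norm_nonneg _).trans (hxM 0)).eq_or_lt with hM | hM
  · refine ⟨0, integrable_zero _ _ _, fun n => ?_, by simp [← hM]⟩
    simp [norm_le_zero_iff.mp (hM ▸ hxM n)]
  set a := ε / (2 + ε) with ha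
  have ha0 : 0 < a := by positivity
  have ha1 : a < 1 := (div_lt_one (by positivity)).mpr (by linarith)
  have hR := ((hasSum_geometric_of_lt_one ha0.le ha1).mul_left M).mul_left (1 + a)
  rw [show (1 + a) * (M * (1 - a)⁻¹) = (1 + ε) * M by rw [ha]; field_simp; ring] at hR
  obtain ⟨S, hSx, hSsum⟩ := exists_geometric_blocks hx hM hxM ha0 ha1
  obtain ⟨f, hf_int, hf_coeff, hf_norm⟩ := hs.exists_lift_of_blocks x S
    (fun j => by positivity) hR.summable
    fun j n hn => (hSx j n hn).trans_lt (lt_mul_of_one_lt_left (by positivity) (by linarith))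
  exact ⟨f, hf_int, fun n => (hf_coeff n).trans (hSsum n), hf_norm.trans_eq hR.tsum_eq⟩
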